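/- For every t ≥ 1, dim(M_t) = t. -/

import Mathlib

open SimpleGraph Function
open scoped Classical

/-- A set `S` is a resolving set of `G`: every pair of distinct vertices differ in
distance to some element of `S`. -/
def IsResolving {V : Type*} (G : SimpleGraph V) (S : Set V) : Prop :=
  ∀ x y : V, x ≠ y → ∃ s ∈ S, G.dist s x ≠ G.dist s y

/-- A fault-tolerant resolving set: removing any single vertex leaves a resolving set. -/
def IsFTResolving {V : Type*} (G : SimpleGraph V) (S : Set V) : Prop :=
  ∀ s ∈ S, IsResolving G (S \ {s})

/-- The metric dimension of `G`. -/
noncomputable def metricDim {V : Type*} [Fintype V] (G : SimpleGraph V) : ℕ :=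
  sInf {n | ∃ S : Finset V, IsResolving G ↑S ∧ S.card = n}

/-- The fault-tolerant metric dimension of `G`. -/
noncomputable def ftDim {V : Type*} [Fintype V] (G : SimpleGraph V) : ℕ :=
  sInf {n | ∃ S : Finset V, IsFTResolving G ↑S ∧ S.card = n}

/-- `S` is a `k`-resolving set: every pair of distinct vertices is distinguished
by at least `k` vertices of `S`. -/
def IsKResolving {V : Type*} [Fintype V] (G : SimpleGraph V) (k : ℕ) (S : Finset V) : Prop :=
  ∀ x y : V, x ≠ y → k ≤ (S.filter (fun s => G.dist s x ≠ G.dist s y)).card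

/-- The `k`-metric dimension of `G`. -/
noncomputable def kMetricDim {V : Type*} [Fintype V] (G : SimpleGraph V) (k : ℕ) : ℕ :=
  sInf {n | ∃ S : Finset V, IsKResolving G k S ∧ S.card = n}

/-- The graph `M_t`: a clique on all binary strings of length `t`, together with
independent vertices `v_1, …, v_t`, where `v_i` is adjacent to exactly those strings
having `1` (`true`) at coordinate `i`. -/
def Mt (t : ℕ) : SimpleGraph ((Fin t → Bool) ⊕ Fin t) where
  Adj x y :=
    match x, y with
    | Sum.inl u, Sum.inl v => u ≠ v
    | Sum.inl u, Sum.inr i => u i = true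
    | Sum.inr i, Sum.inl u => u i = true
    | Sum.inr _, Sum.inr _ => False
  symm := by
    constructor
    rintro (u | i) (v | j) h
    · exact h.symm
    · exact h
    · exact h
    · exact h
  loopless := by
    constructor
    rintro (u | i) h
    · exact h rfl
    · exact h

open Finset

/-!
The vertices `v_1, …, v_t` resolve `M_t`: a string is told apart from another by a coordinate
where they differ, and from `v_i` by its distance 0 to `v_i` itself. Conversely every vertex sees
the strings at only two distances (`0, 1` from a string, `1, 2` from some `v_i`), so a resolving
set `S` encodes the `2 ^ t` strings injectively by `|S|` binary digits, forcing `t ≤ |S|`.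
-/

theorem metricDim_eq_card {V : Type*} [Fintype V] {G : SimpleGraph V} {S : Finset V}
    (hS : IsResolving G S) (hmin : ∀ T : Finset V, IsResolving G T → S.card ≤ T.card) :
    metricDim G = S.card :=
  le_antisymm (Nat.sInf_le ⟨S, hS, rfl⟩)
    (le_csInf ⟨_, S, hS, rfl⟩ fun _ ⟨T, hT, hcard⟩ => hcard ▸ hmin T hT)

theorem IsResolving.card_le_pow {V : Type*} {G : SimpleGraph V} {S A : Finset V}
    (hS : IsResolving G S) {k : ℕ} (hk : ∀ s ∈ S, (A.image (G.dist s)).card ≤ k) :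
    A.card ≤ k ^ S.card := by
  let code : A → ∀ s : S, A.image (G.dist s) := fun u s =>
    ⟨G.dist s u, mem_image_of_mem _ u.2⟩
  have hcode : Injective code := by
    intro u v huv
    by_contra hne
    obtain ⟨s, hs, hd⟩ := hS u v (Subtype.coe_injective.ne hne)
    exact hd (congrArg Subtype.val (congrFun huv ⟨s, hs⟩))
  calc A.card = Fintype.card A := (Fintype.card_coe A).symm
    _ ≤ Fintype.card (∀ s : S, A.image (G.dist s)) := Fintype.card_le_of_injective code hcode
    _ = ∏ s : S, (A.image (G.dist s)).card := by simp only [Fintype.card_pi, Fintype.card_coe]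
    _ ≤ ∏ _s : S, k := prod_le_prod' fun s _ => hk s s.2
    _ = k ^ S.card := by simp

theorem SimpleGraph.dist_eq_two_of_adj_of_adj {V : Type*} {G : SimpleGraph V} {u v w : V}
    (hne : u ≠ w) (hnadj : ¬G.Adj u w) (huv : G.Adj u v) (hvw : G.Adj v w) : G.dist u w = 2 := by
  let p : G.Walk u w := .cons huv (.cons hvw .nil)
  have hle : G.dist u w ≤ 2 := dist_le p
  have hlt : 1 < G.dist u w := Reachable.one_lt_dist_of_ne_of_not_adj ⟨p⟩ hne hnadj
  omega

namespace Mt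

variable {t : ℕ}

theorem adj_inr_inl {i : Fin t} {u : Fin t → Bool} :
    (Mt t).Adj (.inr i) (.inl u) ↔ u i = true :=
  Iff.rfl

theorem dist_inl_inl (w u : Fin t → Bool) :
    (Mt t).dist (.inl w) (.inl u) = if u = w then 0 else 1 := by
  split_ifs with h
  · rw [h, dist_self]
  · exact dist_eq_one_iff_adj.mpr (Ne.symm h)

theorem dist_inr_inl (i : Fin t) (u : Fin t → Bool) :
    (Mt t).dist (.inr i) (.inl u) = if u i then 1 else 2 := by
  split_ifs with h
  · exact dist_eq_one_iff_adj.mpr h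
  · have hupd : update u i true i = true := update_self i true u
    have hne : update u i true ≠ u := fun he => h (he ▸ hupd)
    exact dist_eq_two_of_adj_of_adj Sum.inr_ne_inl h (adj_inr_inl.mpr hupd) hne

theorem dist_inr_inr {i j : Fin t} (hij : i ≠ j) : (Mt t).dist (.inr i) (.inr j) = 2 :=
  dist_eq_two_of_adj_of_adj (v := .inl fun _ => true) (by simpa using hij) id
    (adj_inr_inl.mpr rfl) (adj_inr_inl.mpr rfl).symm

theorem isResolving_inr (t : ℕ) :
    IsResolving (Mt t) ↑(univ.map (.inr : Fin t ↪ (Fin t → Bool) ⊕ Fin t)) := by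
  rintro (u | i) (v | j) hne
  · obtain ⟨i, hi⟩ := Function.ne_iff.mp fun huv : u = v => hne (congrArg _ huv)
    refine ⟨.inr i, by simp, ?_⟩
    rw [dist_inr_inl, dist_inr_inl]
    cases hu : u i <;> cases hv : v i <;> simp_all
  · refine ⟨.inr j, by simp, ?_⟩
    rw [dist_inr_inl, dist_self]
    split_ifs <;> simp
  · refine ⟨.inr i, by simp, ?_⟩
    rw [dist_inr_inl, dist_self]
    split_ifs <;> simp
  · refine ⟨.inr i, by simp, ?_⟩
    rw [dist_self, dist_inr_inr fun hij => hne (congrArg _ hij)]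
    simp

theorem card_image_dist_inl_le_two (s : (Fin t → Bool) ⊕ Fin t) :
    ((univ.map (.inl : (Fin t → Bool) ↪ _)).image ((Mt t).dist s)).card ≤ 2 := by
  obtain ⟨a, b, hab⟩ :
      ∃ a b : ℕ, ∀ u, (Mt t).dist s (.inl u) = a ∨ (Mt t).dist s (.inl u) = b := by
    rcases s with w | i
    · exact ⟨0, 1, fun u => by rw [dist_inl_inl]; split_ifs <;> simp⟩
    · exact ⟨1, 2, fun u => by rw [dist_inr_inl]; split_ifs <;> simp⟩
  calc _ ≤ ({a, b} : Finset ℕ).card := card_le_card fun d hd => by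
        obtain ⟨_, hx, rfl⟩ := mem_image.mp hd
        obtain ⟨u, -, rfl⟩ := mem_map.mp hx
        simpa using hab u
    _ ≤ 2 := card_le_two

theorem le_card_of_isResolving {T : Finset ((Fin t → Bool) ⊕ Fin t)}
    (hT : IsResolving (Mt t) T) : t ≤ T.card := by
  have h := hT.card_le_pow fun s _ => card_image_dist_inl_le_two s
  rw [card_map, card_univ, Fintype.card_fun, Fintype.card_bool, Fintype.card_fin] at h
  exact (Nat.pow_le_pow_iff_right one_lt_two).mp h

end Mt

theorem stmt10_general (t : ℕ) : metricDim (Mt t) = t := by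
  have hcard : (univ.map (.inr : Fin t ↪ (Fin t → Bool) ⊕ Fin t)).card = t := by simp
  rw [metricDim_eq_card (Mt.isResolving_inr t) fun T hT =>
    hcard.trans_le (Mt.le_card_of_isResolving hT), hcard]

theorem stmt10 (t : ℕ) (ht : 1 ≤ t) : metricDim (Mt t) = t :=
  stmt10_general t
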